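/- Let u be a classical solution of the forward problem, and write ‖F‖² := ∫₀^T ∫₀^ℓ F(x,t)² dx dt. Then for every t ∈ [0,T], r₀ ∫₀^ℓ (∂ₓₓu(x,t))² dx ≤ exp(t/ρ₀) ‖F‖². In particular, the third estimate of Theorem 1 holds: sup over t ∈ [0,T] of ∫₀^ℓ (∂ₓₓu(x,t))² dx is at most (1/r₀) C_e² ‖F‖², where C_e² := exp(T/ρ₀). -/

import Mathlib

/-!
The energy `E(t) = ∫₀^ℓ (ρ_A uₜ² + T_r uₓ² + r uₓₓ²) dx` vanishes at `t = 0`. Substituting the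
equation into `E'` and integrating by parts against the energy flux `uₜ (T_r uₓ - Bₓ) + uₓₜ B`,
which vanishes at simply supported ends, gives `E' = 2∫ uₜ F - 2∫ μ uₜ² - 2∫ κ uₓₓₜ²`, hence
`E' ≤ E / ρ₀ + ∫ F²` since `2 uₜ F ≤ uₜ² + F²` and `ρ₀ uₜ² ≤ ρ_A uₜ²`. Grönwall's inequality then
bounds `E(t)` by `exp (t / ρ₀) ‖F‖²`, and `r₀ ∫ uₓₓ² ≤ E(t)`.
-/

open Set

/-- A classical solution of the forward problem for the damped Euler–Bernoulli beam
equation `ρ_A(x) uₜₜ + μ(x) uₜ − (T_r(x) uₓ)ₓ + (r(x) uₓₓ + κ(x) uₓₓₜ)ₓₓ = F(x,t)` on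
`(0,ℓ) × (0,T)`, with homogeneous initial conditions and simply supported boundary
conditions.  The fields `ux, uxx, ut, utt, uxt, uxxt` are the partial derivatives of
`u`, `Ax` is the spatial derivative of `T_r(x) uₓ`, and `Bx, Bxx` are the first and
second spatial derivatives of the bending moment `B(x,t) = r(x) uₓₓ + κ(x) uₓₓₜ`. -/
structure ForwardSol (ℓ T : ℝ) (ρA μ Tr r κ : ℝ → ℝ) (F : ℝ → ℝ → ℝ) where
  u : ℝ → ℝ → ℝ
  ux : ℝ → ℝ → ℝ
  uxx : ℝ → ℝ → ℝ
  ut : ℝ → ℝ → ℝ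
  utt : ℝ → ℝ → ℝ
  uxt : ℝ → ℝ → ℝ
  uxxt : ℝ → ℝ → ℝ
  Ax : ℝ → ℝ → ℝ
  Bx : ℝ → ℝ → ℝ
  Bxx : ℝ → ℝ → ℝ
  smooth : ContDiffOn ℝ (⊤ : ℕ∞) (fun p : ℝ × ℝ => u p.1 p.2) (Icc 0 ℓ ×ˢ Icc 0 T)
  hux : ∀ x ∈ Icc (0:ℝ) ℓ, ∀ t ∈ Icc (0:ℝ) T, HasDerivAt (fun y => u y t) (ux x t) x
  huxx : ∀ x ∈ Icc (0:ℝ) ℓ, ∀ t ∈ Icc (0:ℝ) T, HasDerivAt (fun y => ux y t) (uxx x t) x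
  hut : ∀ x ∈ Icc (0:ℝ) ℓ, ∀ t ∈ Icc (0:ℝ) T, HasDerivAt (fun s => u x s) (ut x t) t
  hutt : ∀ x ∈ Icc (0:ℝ) ℓ, ∀ t ∈ Icc (0:ℝ) T, HasDerivAt (fun s => ut x s) (utt x t) t
  huxt : ∀ x ∈ Icc (0:ℝ) ℓ, ∀ t ∈ Icc (0:ℝ) T, HasDerivAt (fun s => ux x s) (uxt x t) t
  huxxt : ∀ x ∈ Icc (0:ℝ) ℓ, ∀ t ∈ Icc (0:ℝ) T, HasDerivAt (fun s => uxx x s) (uxxt x t) t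
  hAx : ∀ x ∈ Icc (0:ℝ) ℓ, ∀ t ∈ Icc (0:ℝ) T,
    HasDerivAt (fun y => Tr y * ux y t) (Ax x t) x
  hBx : ∀ x ∈ Icc (0:ℝ) ℓ, ∀ t ∈ Icc (0:ℝ) T,
    HasDerivAt (fun y => r y * uxx y t + κ y * uxxt y t) (Bx x t) x
  hBxx : ∀ x ∈ Icc (0:ℝ) ℓ, ∀ t ∈ Icc (0:ℝ) T, HasDerivAt (fun y => Bx y t) (Bxx x t) x
  cont_ux : ContinuousOn (fun p : ℝ × ℝ => ux p.1 p.2) (Icc 0 ℓ ×ˢ Icc 0 T)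
  cont_uxx : ContinuousOn (fun p : ℝ × ℝ => uxx p.1 p.2) (Icc 0 ℓ ×ˢ Icc 0 T)
  cont_ut : ContinuousOn (fun p : ℝ × ℝ => ut p.1 p.2) (Icc 0 ℓ ×ˢ Icc 0 T)
  cont_utt : ContinuousOn (fun p : ℝ × ℝ => utt p.1 p.2) (Icc 0 ℓ ×ˢ Icc 0 T)
  cont_uxt : ContinuousOn (fun p : ℝ × ℝ => uxt p.1 p.2) (Icc 0 ℓ ×ˢ Icc 0 T)
  cont_uxxt : ContinuousOn (fun p : ℝ × ℝ => uxxt p.1 p.2) (Icc 0 ℓ ×ˢ Icc 0 T)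
  cont_Ax : ContinuousOn (fun p : ℝ × ℝ => Ax p.1 p.2) (Icc 0 ℓ ×ˢ Icc 0 T)
  cont_Bx : ContinuousOn (fun p : ℝ × ℝ => Bx p.1 p.2) (Icc 0 ℓ ×ˢ Icc 0 T)
  cont_Bxx : ContinuousOn (fun p : ℝ × ℝ => Bxx p.1 p.2) (Icc 0 ℓ ×ˢ Icc 0 T)
  pde : ∀ x ∈ Ioo (0:ℝ) ℓ, ∀ t ∈ Ioo (0:ℝ) T,
    ρA x * utt x t + μ x * ut x t - Ax x t + Bxx x t = F x t
  init_u : ∀ x ∈ Ioo (0:ℝ) ℓ, u x 0 = 0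
  init_ut : ∀ x ∈ Ioo (0:ℝ) ℓ, ut x 0 = 0
  bc_u0 : ∀ t ∈ Icc (0:ℝ) T, u 0 t = 0
  bc_ul : ∀ t ∈ Icc (0:ℝ) T, u ℓ t = 0
  bc_m0 : ∀ t ∈ Icc (0:ℝ) T, r 0 * uxx 0 t + κ 0 * uxxt 0 t = 0
  bc_ml : ∀ t ∈ Icc (0:ℝ) T, r ℓ * uxx ℓ t + κ ℓ * uxxt ℓ t = 0

open MeasureTheory Function Real
open scoped Interval

theorem ContinuousOn.comp_fst_prod {α β γ : Type*} [TopologicalSpace α] [TopologicalSpace β]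
    [TopologicalSpace γ] {f : α → γ} {s : Set α} {t : Set β} (hf : ContinuousOn f s) :
    ContinuousOn (fun p : α × β => f p.1) (s ×ˢ t) :=
  hf.comp continuousOn_fst fun _ hp => hp.1

theorem HasDerivAt.unique_of_eqOn_Ioo {f g : ℝ → ℝ} {f' g' a b t : ℝ} (hf : HasDerivAt f f' t)
    (hg : HasDerivAt g g' t) (hfg : EqOn f g (Ioo a b)) (ht : t ∈ Ioo a b) : f' = g' :=
  hf.unique (hg.congr_of_eventuallyEq (Filter.eventuallyEq_of_mem (Ioo_mem_nhds ht.1 ht.2) hfg))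

section ParametricIntegral

variable {a b c d : ℝ} {H H' : ℝ → ℝ → ℝ}

theorem continuousOn_intervalIntegral_of_continuousOn_prod (hab : a ≤ b)
    (hH : ContinuousOn (uncurry H) (Icc a b ×ˢ Icc c d)) :
    ContinuousOn (fun t => ∫ x in a..b, H x t) (Icc c d) := by
  obtain ⟨C, hC⟩ := (isCompact_Icc.prod isCompact_Icc).exists_bound_of_continuousOn hH
  have hmem : ∀ {x}, x ∈ Ι a b → x ∈ Icc a b := fun hx => Ioc_subset_Icc_self (uIoc_of_le hab ▸ hx)
  intro t ht
  refine intervalIntegral.continuousWithinAt_of_dominated_interval (bound := fun _ => C)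
    ?_ ?_ intervalIntegrable_const (ae_of_all _ fun x hx => hH.uncurry_left x (hmem hx) t ht)
  · filter_upwards [self_mem_nhdsWithin] with s hs
    exact ((hH.uncurry_right s hs).intervalIntegrable_of_Icc hab).def'.aestronglyMeasurable
  · filter_upwards [self_mem_nhdsWithin] with s hs
    exact ae_of_all _ fun x hx => hC (x, s) ⟨hmem hx, hs⟩

theorem hasDerivAt_intervalIntegral_of_continuousOn_prod (hab : a ≤ b)
    (hH : ContinuousOn (uncurry H) (Icc a b ×ˢ Icc c d))
    (hH' : ContinuousOn (uncurry H') (Icc a b ×ˢ Icc c d))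
    (hderiv : ∀ x ∈ Icc a b, ∀ t ∈ Ioo c d, HasDerivAt (H x) (H' x t) t)
    {t : ℝ} (ht : t ∈ Ioo c d) :
    HasDerivAt (fun t => ∫ x in a..b, H x t) (∫ x in a..b, H' x t) t := by
  obtain ⟨C, hC⟩ := (isCompact_Icc.prod isCompact_Icc).exists_bound_of_continuousOn hH'
  have hmem : ∀ {x}, x ∈ Ι a b → x ∈ Icc a b := fun hx => Ioc_subset_Icc_self (uIoc_of_le hab ▸ hx)
  have hsec : ∀ {K : ℝ → ℝ → ℝ}, ContinuousOn (uncurry K) (Icc a b ×ˢ Icc c d) →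
      ∀ s ∈ Ioo c d, IntervalIntegrable (fun x => K x s) volume a b :=
    fun hK s hs => (hK.uncurry_right s (Ioo_subset_Icc_self hs)).intervalIntegrable_of_Icc hab
  refine (intervalIntegral.hasDerivAt_integral_of_dominated_loc_of_deriv_le
    (F := fun t x => H x t) (F' := fun t x => H' x t) (bound := fun _ => C)
    (Ioo_mem_nhds ht.1 ht.2) ?_ (hsec hH t ht)
    (hsec hH' t ht).def'.aestronglyMeasurable ?_ intervalIntegrable_const ?_).2
  · filter_upwards [Ioo_mem_nhds ht.1 ht.2] with s hs
    exact (hsec hH s hs).def'.aestronglyMeasurable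
  · exact ae_of_all _ fun x hx s hs => hC (x, s) ⟨hmem hx, Ioo_subset_Icc_self hs⟩
  · exact ae_of_all _ fun x hx s hs => hderiv x (hmem hx) s hs

end ParametricIntegral

theorem hasDerivAt_of_mixed_partials {a b c d : ℝ} {v vx vt vxt : ℝ → ℝ → ℝ}
    (hvx : ∀ x ∈ Icc a b, ∀ t ∈ Icc c d, HasDerivAt (fun y => v y t) (vx x t) x)
    (hvt : ∀ x ∈ Icc a b, ∀ t ∈ Icc c d, HasDerivAt (fun s => v x s) (vt x t) t)
    (hvxt : ∀ x ∈ Icc a b, ∀ t ∈ Icc c d, HasDerivAt (fun s => vx x s) (vxt x t) t)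
    (cvx : ContinuousOn (uncurry vx) (Icc a b ×ˢ Icc c d))
    (cvxt : ContinuousOn (uncurry vxt) (Icc a b ×ˢ Icc c d))
    {x t : ℝ} (hx : x ∈ Ioo a b) (ht : t ∈ Ioo c d) :
    HasDerivAt (fun y => vt y t) (vxt x t) x := by
  have htI : t ∈ Icc c d := Ioo_subset_Icc_self ht
  have haI : a ∈ Icc a b := left_mem_Icc.2 (hx.1.trans hx.2).le
  have hcont : ContinuousOn (fun z => vxt z t) (Icc a b) := cvxt.uncurry_right t htI
  -- Differentiating `v y s - v a s = ∫ z in a..y, vx z s` in `s`.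
  have hvt_eq : ∀ y ∈ Icc a b, vt y t = vt a t + ∫ z in a..y, vxt z t := by
    intro y hy
    have hsub : Icc a y ⊆ Icc a b := Icc_subset_Icc_right hy.2
    have hftc : EqOn (fun s => v y s - v a s) (fun s => ∫ z in a..y, vx z s) (Ioo c d) :=
      fun s hs => (intervalIntegral.integral_eq_sub_of_hasDerivAt_of_le hy.1
        (fun z hz => (hvx z (hsub hz) s (Ioo_subset_Icc_self hs)).continuousAt.continuousWithinAt)
        (fun z hz => hvx z (hsub (Ioo_subset_Icc_self hz)) s (Ioo_subset_Icc_self hs))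
        ((cvx.uncurry_right s (Ioo_subset_Icc_self hs)).mono hsub
          |>.intervalIntegrable_of_Icc hy.1)).symm
    have := ((hvt y hy t htI).sub (hvt a haI t htI)).unique_of_eqOn_Ioo
      (hasDerivAt_intervalIntegral_of_continuousOn_prod hy.1
        (cvx.mono (prod_mono hsub subset_rfl)) (cvxt.mono (prod_mono hsub subset_rfl))
        (fun z hz s hs => hvxt z (hsub hz) s (Ioo_subset_Icc_self hs)) ht) hftc ht
    linarith
  have hprim : HasDerivAt (fun y => vt a t + ∫ z in a..y, vxt z t) (vxt x t) x :=
    (intervalIntegral.integral_hasDerivAt_right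
      ((hcont.mono (Icc_subset_Icc_right hx.2.le)).intervalIntegrable_of_Icc hx.1.le)
      ((hcont.mono Ioo_subset_Icc_self).stronglyMeasurableAtFilter isOpen_Ioo x hx)
      (hcont.continuousAt (Icc_mem_nhds hx.1 hx.2))).const_add _
  exact hprim.congr_of_eventuallyEq (Filter.eventuallyEq_of_mem (Ioo_mem_nhds hx.1 hx.2)
    fun y hy => hvt_eq y (Ioo_subset_Icc_self hy))

theorem exp_neg_mul_mul_le_of_hasDerivAt_le {E E' g : ℝ → ℝ} {K a b : ℝ}
    (hE : ContinuousOn E (Icc a b)) (hg : ContinuousOn g (Icc a b))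
    (hE' : ∀ t ∈ Ioo a b, HasDerivAt E (E' t) t)
    (hbound : ∀ t ∈ Ioo a b, E' t ≤ K * E t + g t) {t : ℝ} (ht : t ∈ Icc a b) :
    exp (-(K * t)) * E t ≤ exp (-(K * a)) * E a + ∫ s in a..t, exp (-(K * s)) * g s := by
  have hab : a ≤ b := ht.1.trans ht.2
  have hq : ∀ s, HasDerivAt (fun s => exp (-(K * s))) (-K * exp (-(K * s))) s := fun s => by
    simpa [mul_comm] using ((hasDerivAt_id s).const_mul K).neg.exp
  have hqg : ContinuousOn (fun s => exp (-(K * s)) * g s) (Icc a b) := by fun_prop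
  have hanti : AntitoneOn (fun s => exp (-(K * s)) * E s - ∫ τ in a..s, exp (-(K * τ)) * g τ)
      (Icc a b) := by
    have hprim := intervalIntegral.continuousOn_primitive_interval
      (uIcc_of_le hab ▸ hqg.integrableOn_Icc (μ := volume))
    rw [uIcc_of_le hab] at hprim
    refine antitoneOn_of_hasDerivWithinAt_nonpos (convex_Icc a b)
      (f' := fun s => -K * exp (-(K * s)) * E s + exp (-(K * s)) * E' s - exp (-(K * s)) * g s)
      ((by fun_prop : ContinuousOn _ _).sub hprim) (fun s hs => ?_) (fun s hs => ?_)
    all_goals rw [interior_Icc] at hs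
    · exact (((hq s).mul (hE' s hs)).sub (intervalIntegral.integral_hasDerivAt_right
        (hqg.mono (Icc_subset_Icc_right hs.2.le) |>.intervalIntegrable_of_Icc hs.1.le)
        ((hqg.mono Ioo_subset_Icc_self).stronglyMeasurableAtFilter isOpen_Ioo s hs)
        (hqg.continuousAt (Icc_mem_nhds hs.1 hs.2)))).hasDerivWithinAt
    · nlinarith [mul_le_mul_of_nonneg_left (hbound s hs) (exp_pos (-(K * s))).le]
  simpa using hanti (left_mem_Icc.2 hab) ht ht.1

theorem le_exp_mul_mul_of_hasDerivAt_le {E E' g : ℝ → ℝ} {K T : ℝ} (hK : 0 ≤ K)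
    (hE : ContinuousOn E (Icc 0 T)) (hg : ContinuousOn g (Icc 0 T))
    (hg₀ : ∀ t ∈ Icc 0 T, 0 ≤ g t) (hE' : ∀ t ∈ Ioo 0 T, HasDerivAt E (E' t) t)
    (hbound : ∀ t ∈ Ioo 0 T, E' t ≤ K * E t + g t) {t : ℝ} (ht : t ∈ Icc 0 T) :
    E t ≤ exp (K * t) * (E 0 + ∫ s in 0..t, g s) := by
  have hgt : ContinuousOn g (Icc 0 t) := hg.mono (Icc_subset_Icc_right ht.2)
  have hforcing : ∫ s in 0..t, exp (-(K * s)) * g s ≤ ∫ s in 0..t, g s :=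
    intervalIntegral.integral_mono_on ht.1
      ((by fun_prop : ContinuousOn _ _).intervalIntegrable_of_Icc ht.1)
      (hgt.intervalIntegrable_of_Icc ht.1) fun s hs => mul_le_of_le_one_left
        (hg₀ s ⟨hs.1, hs.2.trans ht.2⟩) (exp_le_one_iff.2 (by nlinarith [hs.1]))
  have := exp_neg_mul_mul_le_of_hasDerivAt_le hE hg hE' hbound ht
  rw [mul_zero, neg_zero, exp_zero, one_mul] at this
  calc E t = exp (K * t) * (exp (-(K * t)) * E t) := by rw [← mul_assoc, ← exp_add]; simp
    _ ≤ exp (K * t) * (E 0 + ∫ s in 0..t, g s) := by gcongr; linarith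

namespace ForwardSol

variable {ℓ T : ℝ} {ρA μ Tr r κ : ℝ → ℝ} {F : ℝ → ℝ → ℝ} (sol : ForwardSol ℓ T ρA μ Tr r κ F)

def energyDensity (x t : ℝ) : ℝ :=
  ρA x * sol.ut x t ^ 2 + Tr x * sol.ux x t ^ 2 + r x * sol.uxx x t ^ 2

noncomputable def energy (t : ℝ) : ℝ := ∫ x in (0:ℝ)..ℓ, sol.energyDensity x t

def energyRate (x t : ℝ) : ℝ :=
  2 * (ρA x * sol.ut x t * sol.utt x t + Tr x * sol.ux x t * sol.uxt x t
    + r x * sol.uxx x t * sol.uxxt x t)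

def energyFlux (x t : ℝ) : ℝ :=
  sol.ut x t * (Tr x * sol.ux x t - sol.Bx x t)
    + sol.uxt x t * (r x * sol.uxx x t + κ x * sol.uxxt x t)

theorem energyFlux_eq_zero (hℓ : 0 ≤ ℓ) {x t : ℝ} (hx : x = 0 ∨ x = ℓ) (ht : t ∈ Ioo 0 T) :
    sol.energyFlux x t = 0 := by
  have htI : t ∈ Icc 0 T := Ioo_subset_Icc_self ht
  obtain ⟨hxI, hu, hB⟩ : x ∈ Icc 0 ℓ ∧ (∀ s ∈ Icc 0 T, sol.u x s = 0) ∧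
      r x * sol.uxx x t + κ x * sol.uxxt x t = 0 := by
    rcases hx with rfl | rfl
    exacts [⟨left_mem_Icc.2 hℓ, sol.bc_u0, sol.bc_m0 t htI⟩,
      ⟨right_mem_Icc.2 hℓ, sol.bc_ul, sol.bc_ml t htI⟩]
  have hut : sol.ut x t = 0 := (sol.hut x hxI t htI).unique_of_eqOn_Ioo (hasDerivAt_const t 0)
    (fun s hs => hu s (Ioo_subset_Icc_self hs)) ht
  simp [energyFlux, hut, hB]

theorem hasDerivAt_energyFlux {x t : ℝ} (hx : x ∈ Ioo 0 ℓ) (ht : t ∈ Ioo 0 T) :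
    HasDerivAt (fun y => sol.energyFlux y t)
      (sol.ut x t * (sol.Ax x t - sol.Bxx x t) + Tr x * sol.ux x t * sol.uxt x t
        + sol.uxxt x t * (r x * sol.uxx x t + κ x * sol.uxxt x t)) x := by
  have hxI : x ∈ Icc 0 ℓ := Ioo_subset_Icc_self hx
  have htI : t ∈ Icc 0 T := Ioo_subset_Icc_self ht
  have hut := hasDerivAt_of_mixed_partials sol.hux sol.hut sol.huxt sol.cont_ux sol.cont_uxt hx ht
  have huxt :=
    hasDerivAt_of_mixed_partials sol.huxx sol.huxt sol.huxxt sol.cont_uxx sol.cont_uxxt hx ht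
  exact ((hut.mul ((sol.hAx x hxI t htI).fun_sub (sol.hBxx x hxI t htI))).add
    (huxt.mul (sol.hBx x hxI t htI))).congr_deriv (by ring)

theorem integral_energyRate_eq (hℓ : 0 ≤ ℓ) (hμ : ContinuousOn μ (Icc 0 ℓ))
    (hTr : ContinuousOn Tr (Icc 0 ℓ)) (hr : ContinuousOn r (Icc 0 ℓ))
    (hκ : ContinuousOn κ (Icc 0 ℓ)) (hF : ContinuousOn (uncurry F) (Icc 0 ℓ ×ˢ Icc 0 T))
    {t : ℝ} (ht : t ∈ Ioo 0 T) :
    ∫ x in (0:ℝ)..ℓ, sol.energyRate x t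
      = 2 * ∫ x in (0:ℝ)..ℓ,
          (sol.ut x t * F x t - μ x * sol.ut x t ^ 2 - κ x * sol.uxxt x t ^ 2) := by
  have htI : t ∈ Icc 0 T := Ioo_subset_Icc_self ht
  have := sol.cont_ut.uncurry_right t htI
  have := sol.cont_ux.uncurry_right t htI
  have := sol.cont_uxx.uncurry_right t htI
  have := sol.cont_uxt.uncurry_right t htI
  have := sol.cont_uxxt.uncurry_right t htI
  have := sol.cont_Ax.uncurry_right t htI
  have := sol.cont_Bx.uncurry_right t htI
  have := sol.cont_Bxx.uncurry_right t htI
  have := hF.uncurry_right t htI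
  have hflux : ∫ x in (0:ℝ)..ℓ, (sol.ut x t * (sol.Ax x t - sol.Bxx x t)
      + Tr x * sol.ux x t * sol.uxt x t + sol.uxxt x t * (r x * sol.uxx x t + κ x * sol.uxxt x t))
      = 0 := by
    rw [intervalIntegral.integral_eq_sub_of_hasDerivAt_of_le hℓ
      (by unfold energyFlux; fun_prop) (fun x hx => sol.hasDerivAt_energyFlux hx ht)
      ((by fun_prop : ContinuousOn _ _).intervalIntegrable_of_Icc hℓ),
      sol.energyFlux_eq_zero hℓ (.inl rfl) ht, sol.energyFlux_eq_zero hℓ (.inr rfl) ht, sub_zero]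
  simp only [energyRate, intervalIntegral.integral_const_mul]
  congr 1
  calc _ = ∫ x in (0:ℝ)..ℓ, ((sol.ut x t * F x t - μ x * sol.ut x t ^ 2 - κ x * sol.uxxt x t ^ 2)
          + (sol.ut x t * (sol.Ax x t - sol.Bxx x t) + Tr x * sol.ux x t * sol.uxt x t
            + sol.uxxt x t * (r x * sol.uxx x t + κ x * sol.uxxt x t))) :=
        intervalIntegral.integral_congr_Ioo_of_le hℓ fun x hx => by
          linear_combination sol.ut x t * sol.pde x hx t ht
    _ = _ := by
      rw [intervalIntegral.integral_add
        ((by fun_prop : ContinuousOn _ _).intervalIntegrable_of_Icc hℓ)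
        ((by fun_prop : ContinuousOn _ _).intervalIntegrable_of_Icc hℓ), hflux, add_zero]

theorem continuousOn_energyDensity (hρA : ContinuousOn ρA (Icc 0 ℓ))
    (hTr : ContinuousOn Tr (Icc 0 ℓ)) (hr : ContinuousOn r (Icc 0 ℓ)) :
    ContinuousOn (uncurry sol.energyDensity) (Icc 0 ℓ ×ˢ Icc 0 T) :=
  ((hρA.comp_fst_prod.mul (sol.cont_ut.pow 2)).add (hTr.comp_fst_prod.mul (sol.cont_ux.pow 2))).add
    (hr.comp_fst_prod.mul (sol.cont_uxx.pow 2))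

theorem hasDerivAt_energy (hℓ : 0 ≤ ℓ) (hρA : ContinuousOn ρA (Icc 0 ℓ))
    (hTr : ContinuousOn Tr (Icc 0 ℓ)) (hr : ContinuousOn r (Icc 0 ℓ)) {t : ℝ} (ht : t ∈ Ioo 0 T) :
    HasDerivAt sol.energy (∫ x in (0:ℝ)..ℓ, sol.energyRate x t) t := by
  refine hasDerivAt_intervalIntegral_of_continuousOn_prod (H' := sol.energyRate) hℓ
    (sol.continuousOn_energyDensity hρA hTr hr)
    ((continuousOn_const (c := (2:ℝ))).mul
      ((((hρA.comp_fst_prod.mul sol.cont_ut).mul sol.cont_utt).add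
        ((hTr.comp_fst_prod.mul sol.cont_ux).mul sol.cont_uxt)).add
        ((hr.comp_fst_prod.mul sol.cont_uxx).mul sol.cont_uxxt)))
    (fun x hx s hs => ?_) ht
  have hsI : s ∈ Icc 0 T := Ioo_subset_Icc_self hs
  exact (((((sol.hutt x hx s hsI).pow 2).const_mul (ρA x)).add
    (((sol.huxt x hx s hsI).pow 2).const_mul (Tr x))).add
    (((sol.huxxt x hx s hsI).pow 2).const_mul (r x))).congr_deriv (by simp only [energyRate]; ring)

theorem integral_energyRate_le (hℓ : 0 ≤ ℓ) {ρ₀ : ℝ} (hρ₀ : 0 < ρ₀)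
    (hρAb : ∀ x ∈ Icc 0 ℓ, ρ₀ ≤ ρA x) (hμb : ∀ x ∈ Icc 0 ℓ, 0 ≤ μ x)
    (hTrb : ∀ x ∈ Icc 0 ℓ, 0 ≤ Tr x) (hrb : ∀ x ∈ Icc 0 ℓ, 0 ≤ r x)
    (hκb : ∀ x ∈ Icc 0 ℓ, 0 ≤ κ x) (hρA : ContinuousOn ρA (Icc 0 ℓ))
    (hμ : ContinuousOn μ (Icc 0 ℓ)) (hTr : ContinuousOn Tr (Icc 0 ℓ))
    (hr : ContinuousOn r (Icc 0 ℓ)) (hκ : ContinuousOn κ (Icc 0 ℓ))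
    (hF : ContinuousOn (uncurry F) (Icc 0 ℓ ×ˢ Icc 0 T)) {t : ℝ} (ht : t ∈ Ioo 0 T) :
    ∫ x in (0:ℝ)..ℓ, sol.energyRate x t ≤ ρ₀⁻¹ * sol.energy t + ∫ x in (0:ℝ)..ℓ, F x t ^ 2 := by
  have htI : t ∈ Icc 0 T := Ioo_subset_Icc_self ht
  have := sol.cont_ut.uncurry_right t htI
  have := sol.cont_uxxt.uncurry_right t htI
  have := hF.uncurry_right t htI
  have he := (sol.continuousOn_energyDensity hρA hTr hr).uncurry_right t htI
  rw [sol.integral_energyRate_eq hℓ hμ hTr hr hκ hF ht, ← intervalIntegral.integral_const_mul,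
    energy, ← intervalIntegral.integral_const_mul,
    ← intervalIntegral.integral_add ((he.const_mul _).intervalIntegrable_of_Icc hℓ)
      ((by fun_prop : ContinuousOn _ _).intervalIntegrable_of_Icc hℓ)]
  refine intervalIntegral.integral_mono_on hℓ
    ((by fun_prop : ContinuousOn _ _).intervalIntegrable_of_Icc hℓ)
    (((he.const_mul _).add (by fun_prop)).intervalIntegrable_of_Icc hℓ) fun x hx => ?_
  have hkin : sol.ut x t ^ 2 ≤ ρ₀⁻¹ * (ρA x * sol.ut x t ^ 2) := by
    rw [← mul_assoc, ← div_eq_inv_mul]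
    exact le_mul_of_one_le_left (sq_nonneg _) ((one_le_div hρ₀).2 (hρAb x hx))
  have hpot : 0 ≤ ρ₀⁻¹ * (Tr x * sol.ux x t ^ 2 + r x * sol.uxx x t ^ 2) := by
    have := hTrb x hx; have := hrb x hx; positivity
  have hμκ : 0 ≤ μ x * sol.ut x t ^ 2 + κ x * sol.uxxt x t ^ 2 := by
    have := hμb x hx; have := hκb x hx; positivity
  simp only [energyDensity]
  nlinarith [sq_nonneg (sol.ut x t - F x t)]

theorem energy_zero (hℓ : 0 ≤ ℓ) (hT : 0 ≤ T) : sol.energy 0 = 0 := by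
  have h0 : (0:ℝ) ∈ Icc 0 T := left_mem_Icc.2 hT
  have hux : EqOn (fun x => sol.ux x 0) 0 (Ioo 0 ℓ) := fun x hx =>
    (sol.hux x (Ioo_subset_Icc_self hx) 0 h0).unique_of_eqOn_Ioo (hasDerivAt_const x 0)
      sol.init_u hx
  have huxx : EqOn (fun x => sol.uxx x 0) 0 (Ioo 0 ℓ) := fun x hx =>
    (sol.huxx x (Ioo_subset_Icc_self hx) 0 h0).unique_of_eqOn_Ioo (hasDerivAt_const x 0) hux hx
  rw [energy, intervalIntegral.integral_congr_Ioo_of_le hℓ (g := fun _ => 0) fun x hx => ?_,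
    intervalIntegral.integral_zero]
  simp [energyDensity, sol.init_ut x hx, hux hx, huxx hx]

theorem energy_le (hℓ : 0 ≤ ℓ) {ρ₀ : ℝ} (hρ₀ : 0 < ρ₀)
    (hρAb : ∀ x ∈ Icc 0 ℓ, ρ₀ ≤ ρA x) (hμb : ∀ x ∈ Icc 0 ℓ, 0 ≤ μ x)
    (hTrb : ∀ x ∈ Icc 0 ℓ, 0 ≤ Tr x) (hrb : ∀ x ∈ Icc 0 ℓ, 0 ≤ r x)
    (hκb : ∀ x ∈ Icc 0 ℓ, 0 ≤ κ x) (hρA : ContinuousOn ρA (Icc 0 ℓ))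
    (hμ : ContinuousOn μ (Icc 0 ℓ)) (hTr : ContinuousOn Tr (Icc 0 ℓ))
    (hr : ContinuousOn r (Icc 0 ℓ)) (hκ : ContinuousOn κ (Icc 0 ℓ))
    (hF : ContinuousOn (uncurry F) (Icc 0 ℓ ×ˢ Icc 0 T)) {t : ℝ} (ht : t ∈ Icc 0 T) :
    sol.energy t ≤ exp (t / ρ₀) * ∫ s in (0:ℝ)..T, ∫ x in (0:ℝ)..ℓ, F x s ^ 2 := by
  have hT : 0 ≤ T := ht.1.trans ht.2
  have hg₀ : ∀ s, 0 ≤ ∫ x in (0:ℝ)..ℓ, F x s ^ 2 :=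
    fun s => intervalIntegral.integral_nonneg hℓ fun _ _ => sq_nonneg _
  have hg := continuousOn_intervalIntegral_of_continuousOn_prod hℓ
    (H := fun x s => F x s ^ 2) (hF.fun_pow 2)
  have hgronwall := le_exp_mul_mul_of_hasDerivAt_le (E := sol.energy) (inv_nonneg.2 hρ₀.le)
    (continuousOn_intervalIntegral_of_continuousOn_prod hℓ
      (sol.continuousOn_energyDensity hρA hTr hr))
    hg (fun s _ => hg₀ s) (fun s hs => sol.hasDerivAt_energy hℓ hρA hTr hr hs)
    (fun s hs => sol.integral_energyRate_le hℓ hρ₀ hρAb hμb hTrb hrb hκb hρA hμ hTr hr hκ hF hs) ht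
  rw [sol.energy_zero hℓ hT, zero_add, ← div_eq_inv_mul] at hgronwall
  refine hgronwall.trans (mul_le_mul_of_nonneg_left ?_ (exp_pos _).le)
  exact intervalIntegral.integral_mono_interval le_rfl ht.1 ht.2 (ae_of_all _ fun s => hg₀ s)
    (hg.intervalIntegrable_of_Icc hT)

theorem mul_integral_uxx_sq_le_energy (hℓ : 0 ≤ ℓ) {r₀ : ℝ}
    (hρAb : ∀ x ∈ Icc 0 ℓ, 0 ≤ ρA x) (hTrb : ∀ x ∈ Icc 0 ℓ, 0 ≤ Tr x)
    (hrb : ∀ x ∈ Icc 0 ℓ, r₀ ≤ r x) (hρA : ContinuousOn ρA (Icc 0 ℓ))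
    (hTr : ContinuousOn Tr (Icc 0 ℓ)) (hr : ContinuousOn r (Icc 0 ℓ)) {t : ℝ} (ht : t ∈ Icc 0 T) :
    r₀ * ∫ x in (0:ℝ)..ℓ, sol.uxx x t ^ 2 ≤ sol.energy t := by
  have := sol.cont_uxx.uncurry_right t ht
  rw [← intervalIntegral.integral_const_mul]
  refine intervalIntegral.integral_mono_on hℓ
    ((by fun_prop : ContinuousOn _ _).intervalIntegrable_of_Icc hℓ)
    (((sol.continuousOn_energyDensity hρA hTr hr).uncurry_right t ht).intervalIntegrable_of_Icc hℓ)
    fun x hx => ?_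
  have := hρAb x hx; have := hTrb x hx
  have := mul_le_mul_of_nonneg_right (hrb x hx) (sq_nonneg (sol.uxx x t))
  simp only [energyDensity]
  nlinarith [sq_nonneg (sol.ut x t), sq_nonneg (sol.ux x t)]

end ForwardSol

theorem curvature_energy_estimate_general
    (ℓ T ρ₀ r₀ κ₀ : ℝ) (hℓ : 0 < ℓ)
    (hρ₀ : 0 < ρ₀) (hr₀ : 0 < r₀) (hκ₀ : 0 < κ₀)
    (ρA μ Tr r κ : ℝ → ℝ) (F : ℝ → ℝ → ℝ)
    (hρA : ContDiffOn ℝ (⊤ : ℕ∞) ρA (Icc 0 ℓ))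
    (hμ : ContDiffOn ℝ (⊤ : ℕ∞) μ (Icc 0 ℓ))
    (hTr : ContDiffOn ℝ (⊤ : ℕ∞) Tr (Icc 0 ℓ))
    (hr : ContDiffOn ℝ (⊤ : ℕ∞) r (Icc 0 ℓ))
    (hκ : ContDiffOn ℝ (⊤ : ℕ∞) κ (Icc 0 ℓ))
    (hρAb : ∀ x ∈ Icc (0:ℝ) ℓ, ρ₀ ≤ ρA x)
    (hμb : ∀ x ∈ Icc (0:ℝ) ℓ, 0 ≤ μ x)
    (hTrb : ∀ x ∈ Icc (0:ℝ) ℓ, 0 ≤ Tr x)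
    (hrb : ∀ x ∈ Icc (0:ℝ) ℓ, r₀ ≤ r x)
    (hκb : ∀ x ∈ Icc (0:ℝ) ℓ, κ₀ ≤ κ x)
    (hF : ContinuousOn (fun p : ℝ × ℝ => F p.1 p.2) (Icc 0 ℓ ×ˢ Icc 0 T))
    (sol : ForwardSol ℓ T ρA μ Tr r κ F) :
    (∀ t ∈ Icc (0:ℝ) T,
      r₀ * (∫ x in (0:ℝ)..ℓ, (sol.uxx x t) ^ 2)
        ≤ Real.exp (t / ρ₀) * (∫ t in (0:ℝ)..T, ∫ x in (0:ℝ)..ℓ, (F x t) ^ 2)) ∧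
    (∀ t ∈ Icc (0:ℝ) T,
      (∫ x in (0:ℝ)..ℓ, (sol.uxx x t) ^ 2)
        ≤ (1 / r₀) * Real.exp (T / ρ₀) * (∫ t in (0:ℝ)..T, ∫ x in (0:ℝ)..ℓ, (F x t) ^ 2)) := by
  have hcurvature : ∀ t ∈ Icc (0:ℝ) T, r₀ * (∫ x in (0:ℝ)..ℓ, (sol.uxx x t) ^ 2)
      ≤ exp (t / ρ₀) * (∫ t in (0:ℝ)..T, ∫ x in (0:ℝ)..ℓ, (F x t) ^ 2) := fun t ht =>
    (sol.mul_integral_uxx_sq_le_energy hℓ.le (fun x hx => hρ₀.le.trans (hρAb x hx)) hTrb hrb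
      hρA.continuousOn hTr.continuousOn hr.continuousOn ht).trans
    (sol.energy_le hℓ.le hρ₀ hρAb hμb hTrb (fun x hx => hr₀.le.trans (hrb x hx))
      (fun x hx => hκ₀.le.trans (hκb x hx)) hρA.continuousOn hμ.continuousOn hTr.continuousOn
      hr.continuousOn hκ.continuousOn hF ht)
  refine ⟨hcurvature, fun t ht => ?_⟩
  have hF₀ : 0 ≤ ∫ t in (0:ℝ)..T, ∫ x in (0:ℝ)..ℓ, (F x t) ^ 2 :=
    intervalIntegral.integral_nonneg (ht.1.trans ht.2) fun s _ =>
      intervalIntegral.integral_nonneg hℓ.le fun _ _ => sq_nonneg _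
  rw [mul_assoc, one_div_mul_eq_div, le_div_iff₀ hr₀, mul_comm]
  exact (hcurvature t ht).trans (mul_le_mul_of_nonneg_right
    (exp_le_exp.2 (div_le_div_of_nonneg_right ht.2 hρ₀.le)) hF₀)

/-- **The third estimate of Theorem 1.** -/
theorem curvature_energy_estimate
    (ℓ T ρ₀ r₀ κ₀ : ℝ) (hℓ : 0 < ℓ) (hT : 0 < T)
    (hρ₀ : 0 < ρ₀) (hr₀ : 0 < r₀) (hκ₀ : 0 < κ₀)
    (ρA μ Tr r κ : ℝ → ℝ) (F : ℝ → ℝ → ℝ)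
    (hρA : ContDiffOn ℝ (⊤ : ℕ∞) ρA (Icc 0 ℓ))
    (hμ : ContDiffOn ℝ (⊤ : ℕ∞) μ (Icc 0 ℓ))
    (hTr : ContDiffOn ℝ (⊤ : ℕ∞) Tr (Icc 0 ℓ))
    (hr : ContDiffOn ℝ (⊤ : ℕ∞) r (Icc 0 ℓ))
    (hκ : ContDiffOn ℝ (⊤ : ℕ∞) κ (Icc 0 ℓ))
    (hρAb : ∀ x ∈ Icc (0:ℝ) ℓ, ρ₀ ≤ ρA x)
    (hμb : ∀ x ∈ Icc (0:ℝ) ℓ, 0 ≤ μ x)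
    (hTrb : ∀ x ∈ Icc (0:ℝ) ℓ, 0 ≤ Tr x)
    (hrb : ∀ x ∈ Icc (0:ℝ) ℓ, r₀ ≤ r x)
    (hκb : ∀ x ∈ Icc (0:ℝ) ℓ, κ₀ ≤ κ x)
    (hF : ContinuousOn (fun p : ℝ × ℝ => F p.1 p.2) (Icc 0 ℓ ×ˢ Icc 0 T))
    (sol : ForwardSol ℓ T ρA μ Tr r κ F) :
    (∀ t ∈ Icc (0:ℝ) T,
      r₀ * (∫ x in (0:ℝ)..ℓ, (sol.uxx x t) ^ 2)
        ≤ Real.exp (t / ρ₀) * (∫ t in (0:ℝ)..T, ∫ x in (0:ℝ)..ℓ, (F x t) ^ 2)) ∧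
    (∀ t ∈ Icc (0:ℝ) T,
      (∫ x in (0:ℝ)..ℓ, (sol.uxx x t) ^ 2)
        ≤ (1 / r₀) * Real.exp (T / ρ₀) * (∫ t in (0:ℝ)..T, ∫ x in (0:ℝ)..ℓ, (F x t) ^ 2)) :=
  curvature_energy_estimate_general ℓ T ρ₀ r₀ κ₀ hℓ hρ₀ hr₀ hκ₀ ρA μ Tr r κ F hρA hμ hTr hr hκ hρAb
    hμb hTrb hrb hκb hF sol
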